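/- Both the IIS solution R^IIS and the plurality solution R^P satisfy II-CCON, PI-CCON, and PP-CCON, but neither satisfies IP-CCON. -/

import Mathlib

namespace SocRank

/-- A coalitional ranking (a weak order on a set of feasible nonempty coalitions),
represented by its list of equivalence classes, listed from best to worst. -/
structure CoalRanking (X : Type*) where
  classes : List (Finset (Finset X))
  class_nonempty : ∀ C ∈ classes, C.Nonempty
  coal_nonempty : ∀ C ∈ classes, ∀ S ∈ C, S.Nonempty
  classes_disjoint : classes.Pairwise Disjoint

namespace CoalRanking

variable {X : Type*}

/-- The coalition domain `𝒟(≿)` of a coalitional ranking. -/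
def domain [DecidableEq X] (r : CoalRanking X) : Finset (Finset X) :=
  r.classes.foldr (· ∪ ·) ∅

/-- The list of equivalence classes of the restriction of a ranking to a set `D`
of coalitions. -/
def restrictClasses [DecidableEq X] (r : CoalRanking X) (D : Finset (Finset X)) :
    List (Finset (Finset X)) :=
  (r.classes.map (· ∩ D)).filter (fun C => decide C.Nonempty)

/-- Merging two lists of equivalence classes by aligning them at the top. -/
def zipUnion [DecidableEq X] :
    List (Finset (Finset X)) → List (Finset (Finset X)) → List (Finset (Finset X))
  | [], M => M
  | L, [] => L
  | A :: L, B :: M => (A ∪ B) :: zipUnion L M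

/-- `r` is a sum of the disjoint rankings `r₁` and `r₂`: its domain is the union of
the two domains and its restriction to the domain of `rᵢ` is `rᵢ`. -/
def IsSum [DecidableEq X] (r r₁ r₂ : CoalRanking X) : Prop :=
  Disjoint r₁.domain r₂.domain ∧
  r.domain = r₁.domain ∪ r₂.domain ∧
  r.restrictClasses r₁.domain = r₁.classes ∧
  r.restrictClasses r₂.domain = r₂.classes

/-- `r` is the concatenation sum `r₁ · r₂` of the disjoint rankings `r₁` and `r₂`. -/
def IsConcatSum [DecidableEq X] (r r₁ r₂ : CoalRanking X) : Prop :=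
  Disjoint r₁.domain r₂.domain ∧ r.classes = r₁.classes ++ r₂.classes

/-- `r` is the top-aligned sum `r₁ ⊨ r₂` of the disjoint rankings `r₁` and `r₂`. -/
def IsTopAlignedSum [DecidableEq X] (r r₁ r₂ : CoalRanking X) : Prop :=
  Disjoint r₁.domain r₂.domain ∧ r.classes = zipUnion r₁.classes r₂.classes

/-- `r` is the bottom-aligned sum `r₁ ⫤ r₂` of the disjoint rankings `r₁` and `r₂`. -/
def IsBottomAlignedSum [DecidableEq X] (r r₁ r₂ : CoalRanking X) : Prop :=
  Disjoint r₁.domain r₂.domain ∧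
  r.classes = (zipUnion r₁.classes.reverse r₂.classes.reverse).reverse

/-- Renaming the individuals of a coalitional ranking by a permutation `σ` of `X`:
the ranking `≿^σ`. -/
def mapPerm [DecidableEq X] (σ : Equiv.Perm X) (r : CoalRanking X) : CoalRanking X where
  classes := r.classes.map (fun C => C.image (fun S => S.image σ))
  class_nonempty := by
    intro C hC
    simp only [List.mem_map] at hC
    obtain ⟨C₀, hC₀, rfl⟩ := hC
    exact (r.class_nonempty C₀ hC₀).image _
  coal_nonempty := by
    intro C hC S hS
    simp only [List.mem_map] at hC
    obtain ⟨C₀, hC₀, rfl⟩ := hC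
    simp only [Finset.mem_image] at hS
    obtain ⟨S₀, hS₀, rfl⟩ := hS
    exact (r.coal_nonempty C₀ hC₀ S₀ hS₀).image _
  classes_disjoint := by
    refine List.Pairwise.map _ (fun {A B} h => ?_) r.classes_disjoint
    exact (Finset.disjoint_image
      (Finset.image_injective σ.injective)).mpr h

/-- Renaming the coalitions of a coalitional ranking by a permutation `π` of the set of
coalitions (mapping nonempty sets to nonempty sets): the ranking `≿_π`. -/
def mapCoalPerm [DecidableEq X] (π : Equiv.Perm (Finset X))
    (hπ : ∀ S : Finset X, S.Nonempty → (π S).Nonempty) (r : CoalRanking X) :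
    CoalRanking X where
  classes := r.classes.map (fun C => C.image π)
  class_nonempty := by
    intro C hC
    simp only [List.mem_map] at hC
    obtain ⟨C₀, hC₀, rfl⟩ := hC
    exact (r.class_nonempty C₀ hC₀).image _
  coal_nonempty := by
    intro C hC S hS
    simp only [List.mem_map] at hC
    obtain ⟨C₀, hC₀, rfl⟩ := hC
    simp only [Finset.mem_image] at hS
    obtain ⟨S₀, hS₀, rfl⟩ := hS
    exact hπ S₀ (r.coal_nonempty C₀ hC₀ S₀ hS₀)
  classes_disjoint := by
    refine List.Pairwise.map _ (fun {A B} h => ?_) r.classes_disjoint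
    exact (Finset.disjoint_image π.injective).mpr h

end CoalRanking

open CoalRanking

variable {X : Type*}

/-- A social ranking solution: a map assigning to every coalitional ranking a binary
relation on the individuals. -/
abbrev SRSMap (X : Type*) := CoalRanking X → X → X → Prop

/-- The symmetric part `I` of the social ranking. -/
def Ind (R : SRSMap X) (r : CoalRanking X) (x y : X) : Prop := R r x y ∧ R r y x

/-- The asymmetric part `P` of the social ranking. -/
def Pref (R : SRSMap X) (r : CoalRanking X) (x y : X) : Prop := R r x y ∧ ¬ R r y x

/-- Conditions (1)-(4) of consistency for the triple `(r₁, r₂, r)`. -/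
def ConsistentAt (R : SRSMap X) (r₁ r₂ r : CoalRanking X) : Prop :=
  ∀ x y : X,
    (Ind R r₁ x y → Ind R r₂ x y → Ind R r x y) ∧
    (Ind R r₁ x y → Pref R r₂ x y → Pref R r x y) ∧
    (Pref R r₁ x y → Ind R r₂ x y → Pref R r x y) ∧
    (Pref R r₁ x y → Pref R r₂ x y → Pref R r x y)

/-- Consistency (CON). -/
def CON [DecidableEq X] (R : SRSMap X) : Prop :=
  ∀ r₁ r₂ r : CoalRanking X, IsSum r r₁ r₂ → ConsistentAt R r₁ r₂ r

/-- Concatenation consistency (CCON). -/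
def CCON [DecidableEq X] (R : SRSMap X) : Prop :=
  ∀ r₁ r₂ r : CoalRanking X, IsConcatSum r r₁ r₂ → ConsistentAt R r₁ r₂ r

/-- Top-aligned consistency (TCON). -/
def TCON [DecidableEq X] (R : SRSMap X) : Prop :=
  ∀ r₁ r₂ r : CoalRanking X, IsTopAlignedSum r r₁ r₂ → ConsistentAt R r₁ r₂ r

/-- Bottom-aligned consistency (BCON). -/
def BCON [DecidableEq X] (R : SRSMap X) : Prop :=
  ∀ r₁ r₂ r : CoalRanking X, IsBottomAlignedSum r r₁ r₂ → ConsistentAt R r₁ r₂ r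

/-- II-concatenation consistency. -/
def IICCON [DecidableEq X] (R : SRSMap X) : Prop :=
  ∀ r₁ r₂ r : CoalRanking X, IsConcatSum r r₁ r₂ →
    ∀ x y : X, Ind R r₁ x y → Ind R r₂ x y → Ind R r x y

/-- IP-concatenation consistency. -/
def IPCCON [DecidableEq X] (R : SRSMap X) : Prop :=
  ∀ r₁ r₂ r : CoalRanking X, IsConcatSum r r₁ r₂ →
    ∀ x y : X, Ind R r₁ x y → Pref R r₂ x y → Pref R r x y

/-- PI-concatenation consistency. -/
def PICCON [DecidableEq X] (R : SRSMap X) : Prop :=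
  ∀ r₁ r₂ r : CoalRanking X, IsConcatSum r r₁ r₂ →
    ∀ x y : X, Pref R r₁ x y → Ind R r₂ x y → Pref R r x y

/-- PP-concatenation consistency. -/
def PPCCON [DecidableEq X] (R : SRSMap X) : Prop :=
  ∀ r₁ r₂ r : CoalRanking X, IsConcatSum r r₁ r₂ →
    ∀ x y : X, Pref R r₁ x y → Pref R r₂ x y → Pref R r x y

/-- `x_k`: the number of coalitions of the class `C` containing `x`. -/
def cnt [DecidableEq X] (x : X) (C : Finset (Finset X)) : ℕ :=
  (C.filter (fun S => x ∈ S)).card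

/-- The vector `θ_≿(x) = (x₁, …, x_l)`. -/
def theta [DecidableEq X] (r : CoalRanking X) (x : X) : List ℕ :=
  r.classes.map (cnt x)

/-- `sign`: `1` on positive numbers, `0` otherwise. -/
def sgn (n : ℕ) : ℕ := if 0 < n then 1 else 0

/-- The vector `θ̇_≿(x) = (sign(x₁), …, sign(x_l))`. -/
def thetaDot [DecidableEq X] (r : CoalRanking X) (x : X) : List ℕ :=
  (theta r x).map sgn

/-- The lexicographic order `≥^L` on vectors (of equal length). -/
def lexGE : List ℕ → List ℕ → Prop
  | _, [] => True
  | [], _ :: _ => False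
  | a :: as, b :: bs => b < a ∨ (a = b ∧ lexGE as bs)

/-- The lexicographic excellence solution (lex-cel) `R^L`. -/
def lexcel [DecidableEq X] : SRSMap X := fun r x y => lexGE (theta r x) (theta r y)

/-- The sign lexicographic excellence solution (S lex-cel) `R^{SL}`. -/
def slexcel [DecidableEq X] : SRSMap X := fun r x y => lexGE (thetaDot r x) (thetaDot r y)

/-- The plurality solution `R^P`. -/
def plurality [DecidableEq X] : SRSMap X := fun r x y =>
  (theta r y).headD 0 ≤ (theta r x).headD 0

/-- The sign plurality solution `R^{SP}`. -/
def splurality [DecidableEq X] : SRSMap X := fun r x y =>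
  sgn ((theta r y).headD 0) ≤ sgn ((theta r x).headD 0)

/-- The anti-plurality solution `R^{AP}`. -/
def antiplurality [DecidableEq X] : SRSMap X := fun r x y =>
  (theta r x).getLastD 0 ≤ (theta r y).getLastD 0

/-- `e_≿(x)`: the largest `k` such that `x` belongs to every coalition of each of the
first `k` equivalence classes. -/
def eIIS [DecidableEq X] (r : CoalRanking X) (x : X) : ℕ :=
  (r.classes.takeWhile (fun C => decide (∀ S ∈ C, x ∈ S))).length

/-- The intersection initial segment solution (IIS) `R^{IIS}`. -/
def iis [DecidableEq X] : SRSMap X := fun r x y => eIIS r y ≤ eIIS r x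

/-- The index of the equivalence class a coalition belongs to. -/
def classIdx [DecidableEq X] (r : CoalRanking X) (S : Finset X) : ℕ :=
  r.classes.findIdx (fun C => decide (S ∈ C))

/-- `C_{xy}`: the number of CP comparisons in favour of `x` against `y`. -/
def cpCount [DecidableEq X] [Fintype X] (r : CoalRanking X) (x y : X) : ℕ :=
  ((Finset.univ : Finset (Finset X)).filter (fun S =>
    S.Nonempty ∧ x ∉ S ∧ y ∉ S ∧ insert x S ∈ r.domain ∧ insert y S ∈ r.domain ∧
    classIdx r (insert x S) < classIdx r (insert y S))).card

/-- The Ceteris Paribus majority solution `R^{CPM}`. -/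
def cpm [DecidableEq X] [Fintype X] : SRSMap X := fun r x y =>
  cpCount r y x ≤ cpCount r x y

/-- Neutrality (NT). -/
def NT [DecidableEq X] (R : SRSMap X) : Prop :=
  ∀ (σ : Equiv.Perm X) (r : CoalRanking X) (x y : X),
    R (r.mapPerm σ) (σ x) (σ y) ↔ R r x y

/-- Weak coalitional anonymity (WCA). -/
def WCA [DecidableEq X] (R : SRSMap X) : Prop :=
  ∀ (x y : X) (π : Equiv.Perm (Finset X))
    (hπ : ∀ S : Finset X, S.Nonempty → (π S).Nonempty),
    (∀ S : Finset X, x ∈ S → x ∈ π S) → (∀ S : Finset X, y ∈ S → y ∈ π S) →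
    ∀ r : CoalRanking X,
      (R (r.mapCoalPerm π hπ) x y ↔ R r x y) ∧ (R (r.mapCoalPerm π hπ) y x ↔ R r y x)

/-- The weak union very important person property (WUVIP). -/
def WUVIP (R : SRSMap X) : Prop :=
  ∀ (r : CoalRanking X) (A B : Finset (Finset X)), r.classes = [A, B] →
    ∀ x y : X, (∃ S ∈ A, x ∈ S) → (∀ S ∈ A, y ∉ S) → Pref R r x y

/-- All indifference all winners (AIAW). -/
def AIAW [DecidableEq X] (R : SRSMap X) : Prop :=
  ∀ r : CoalRanking X, r.classes.length ≤ 1 →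
    (∀ x y : X, (∃ S ∈ r.domain, x ∈ S) → (∃ S ∈ r.domain, y ∈ S) → Ind R r x y) ∧
    (∀ x z : X, (∃ S ∈ r.domain, x ∈ S) → (∀ S ∈ r.domain, z ∉ S) → Pref R r x z)

/-- Independence of the decomposition of the worst sets (IDWS). -/
def IDWS [DecidableEq X] (R : SRSMap X) : Prop :=
  ∀ (r r' : CoalRanking X) (L G : List (Finset (Finset X))) (W : Finset (Finset X)),
    L ≠ [] → r.classes = L ++ [W] → r'.classes = L ++ G →
    G.foldr (· ∪ ·) ∅ = W →
    ∀ x y : X, Pref R r x y → Pref R r' x y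

/-- Independence of the addition of the worst sets (IAWS). -/
def IAWS [DecidableEq X] (R : SRSMap X) : Prop :=
  ∀ (r r' : CoalRanking X) (G : Finset (Finset X)),
    r'.classes = r.classes ++ [G] → (∀ S ∈ G, S ∉ r.domain) →
    ∀ x y : X, Pref R r x y → Pref R r' x y

/-- Tops-only (TO). -/
def TO (R : SRSMap X) : Prop :=
  ∀ (r r' : CoalRanking X) (A : Finset (Finset X)),
    r.classes.head? = some A → r'.classes.head? = some A → R r = R r'

/-- The dual S lex-cel `R^{DSL}`. -/
def dslexcel [DecidableEq X] : SRSMap X := fun r x y =>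
  lexGE ((thetaDot r y).reverse) ((thetaDot r x).reverse)

/-- The inverse dual S lex-cel `R^{IDSL}`. -/
def idslexcel [DecidableEq X] : SRSMap X := fun r x y => dslexcel r y x

/-- The vector `θ̃_≿(x)` used by the S lex-cel with precedence on unanimity. -/
def tildeTheta [DecidableEq X] (r : CoalRanking X) (x : X) : List ℕ :=
  r.classes.map (fun C => if cnt x C = C.card then 2 else if 0 < cnt x C then 1 else 0)

/-- The S lex-cel with a particular precedence on unanimity `R^{SLUN}`. -/
def slun [DecidableEq X] : SRSMap X := fun r x y =>
  lexGE (tildeTheta r x) (tildeTheta r y)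

/-- The S sum score `Σ_k sign(x_k)`. -/
def ssum [DecidableEq X] (r : CoalRanking X) (x : X) : ℕ := (thetaDot r x).sum

/-- The S sum rule with tie-breaking by S lex-cel `R^{SSUM,SL}`. -/
def ssumSL [DecidableEq X] : SRSMap X := fun r x y =>
  ssum r y < ssum r x ∨ (ssum r x = ssum r y ∧ slexcel r x y)

end SocRank

open SocRank

/-! Both solutions rank individuals by a natural-number score (`e_≿` and `x₁`), and the score
of `x` in `≿₁ · ≿₂` is a function of its scores in `≿₁` and `≿₂`, which gives II-CCON. This
function is dominated by the score in `≿₁`, so a strict preference in `≿₁` survives in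
`≿₁ · ≿₂`, which gives PI- and PP-CCON. The same domination breaks IP-CCON: when `≿₁` ties `x`
and `y` with a score short of its length (IIS) or is nonempty (plurality), `≿₂` is ignored. -/

namespace SocRank

variable {X : Type*}

namespace CoalRanking

variable [DecidableEq X]

lemma subset_domain {r : CoalRanking X} {C : Finset (Finset X)} (hC : C ∈ r.classes) :
    C ⊆ r.domain := by
  unfold domain
  generalize r.classes = L at hC ⊢
  induction L with
  | nil => simp at hC
  | cons D L ih =>
    rcases List.mem_cons.mp hC with rfl | hC
    · exact Finset.subset_union_left
    · exact (ih hC).trans Finset.subset_union_right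

def single (C : Finset (Finset X)) (hC : C.Nonempty) (hS : ∀ S ∈ C, S.Nonempty) :
    CoalRanking X :=
  ⟨[C], by simpa, by simpa, by simp⟩

@[simp]
lemma domain_single (C : Finset (Finset X)) (hC : C.Nonempty) (hS : ∀ S ∈ C, S.Nonempty) :
    (single C hC hS).domain = C := by
  simp [single, domain]

def concat (r₁ r₂ : CoalRanking X) (h : Disjoint r₁.domain r₂.domain) : CoalRanking X where
  classes := r₁.classes ++ r₂.classes
  class_nonempty C hC :=
    (List.mem_append.mp hC).elim (r₁.class_nonempty C) (r₂.class_nonempty C)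
  coal_nonempty C hC :=
    (List.mem_append.mp hC).elim (r₁.coal_nonempty C) (r₂.coal_nonempty C)
  classes_disjoint := List.pairwise_append.mpr ⟨r₁.classes_disjoint, r₂.classes_disjoint,
    fun _ hC₁ _ hC₂ => h.mono (subset_domain hC₁) (subset_domain hC₂)⟩

lemma isConcatSum_concat (r₁ r₂ : CoalRanking X) (h : Disjoint r₁.domain r₂.domain) :
    IsConcatSum (r₁.concat r₂ h) r₁ r₂ :=
  ⟨h, rfl⟩

end CoalRanking

open CoalRanking

section Score

def scoreSRS (score : CoalRanking X → X → ℕ) : SRSMap X := fun r x y => score r y ≤ score r x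

variable {score : CoalRanking X → X → ℕ} {r : CoalRanking X} {x y : X}

lemma ind_scoreSRS : Ind (scoreSRS score) r x y ↔ score r x = score r y := by
  simp only [Ind, scoreSRS]
  omega

lemma pref_scoreSRS : Pref (scoreSRS score) r x y ↔ score r y < score r x := by
  simp only [Pref, scoreSRS]
  omega

lemma IICCON_scoreSRS [DecidableEq X]
    (h : ∀ r₁ r₂ r : CoalRanking X, IsConcatSum r r₁ r₂ →
      ∃ φ : ℕ → ℕ → ℕ, ∀ x, score r x = φ (score r₁ x) (score r₂ x)) :
    IICCON (scoreSRS score) := by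
  intro r₁ r₂ r hr x y hI₁ hI₂
  obtain ⟨φ, hφ⟩ := h r₁ r₂ r hr
  rw [ind_scoreSRS] at hI₁ hI₂ ⊢
  rw [hφ, hφ, hI₁, hI₂]

end Score

section LeftDecisive

variable [DecidableEq X]

def ConcatLeftDecisive (R : SRSMap X) : Prop :=
  ∀ r₁ r₂ r : CoalRanking X, IsConcatSum r r₁ r₂ → ∀ x y, Pref R r₁ x y → Pref R r x y

variable {R : SRSMap X}

lemma ConcatLeftDecisive.piccon (h : ConcatLeftDecisive R) : PICCON R :=
  fun r₁ r₂ r hr x y hP₁ _ => h r₁ r₂ r hr x y hP₁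

lemma ConcatLeftDecisive.ppccon (h : ConcatLeftDecisive R) : PPCCON R :=
  fun r₁ r₂ r hr x y hP₁ _ => h r₁ r₂ r hr x y hP₁

end LeftDecisive

variable [DecidableEq X]

section IIS

lemma iis_eq_scoreSRS : (iis : SRSMap X) = scoreSRS eIIS := rfl

lemma eIIS_le_length (r : CoalRanking X) (x : X) : eIIS r x ≤ r.classes.length :=
  (List.takeWhile_sublist _).length_le

lemma eIIS_of_isConcatSum {r r₁ r₂ : CoalRanking X} (hr : IsConcatSum r r₁ r₂) (x : X) :
    eIIS r x = if eIIS r₁ x = r₁.classes.length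
      then r₁.classes.length + eIIS r₂ x else eIIS r₁ x := by
  unfold eIIS
  rw [hr.2, List.takeWhile_append]
  split_ifs <;> simp_all

lemma eIIS_single (C : Finset (Finset X)) (hC : C.Nonempty) (hS : ∀ S ∈ C, S.Nonempty)
    (x : X) : eIIS (single C hC hS) x = if ∀ S ∈ C, x ∈ S then 1 else 0 := by
  simp only [eIIS, single, List.takeWhile_cons, List.takeWhile_nil, decide_eq_true_eq]
  split_ifs <;> rfl

lemma iis_IICCON : IICCON (iis : SRSMap X) :=
  IICCON_scoreSRS fun r₁ _ _ hr =>
    ⟨fun a b => if a = r₁.classes.length then r₁.classes.length + b else a,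
      eIIS_of_isConcatSum hr⟩

lemma iis_concatLeftDecisive : ConcatLeftDecisive (iis : SRSMap X) := by
  intro r₁ r₂ r hr x y hP
  rw [iis_eq_scoreSRS, pref_scoreSRS] at hP ⊢
  have := eIIS_le_length r₁ x
  rw [eIIS_of_isConcatSum hr x, eIIS_of_isConcatSum hr y]
  split_ifs <;> omega

lemma not_IPCCON_iis {x y z : X} (hxy : x ≠ y) (hxz : x ≠ z) (hyz : y ≠ z) :
    ¬ IPCCON (iis : SRSMap X) := by
  have hd : Disjoint ({{x}, {y}} : Finset (Finset X)) {{x, z}} := by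
    rw [Finset.disjoint_singleton_right]
    simp only [Finset.mem_insert, Finset.mem_singleton, not_or]
    constructor <;> intro h <;> simpa [Finset.card_pair hxz] using congrArg Finset.card h
  set r₁ := single {{x}, {y}} (by simp) (by simp)
  set r₂ := single {{x, z}} (by simp) (by simp)
  have hr := isConcatSum_concat r₁ r₂ (by simpa [r₁, r₂] using hd)
  have e₁x : eIIS r₁ x = 0 := by simp [r₁, eIIS_single, hxy]
  have e₁y : eIIS r₁ y = 0 := by simp [r₁, eIIS_single, hxy.symm]
  have e₂x : eIIS r₂ x = 1 := by simp [r₂, eIIS_single]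
  have e₂y : eIIS r₂ y = 0 := by simp [r₂, eIIS_single, hxy.symm, hyz]
  have hlen : r₁.classes.length = 1 := rfl
  intro hIP
  have hP := hIP r₁ r₂ _ hr x y (by rw [iis_eq_scoreSRS, ind_scoreSRS]; omega)
    (by rw [iis_eq_scoreSRS, pref_scoreSRS]; omega)
  rw [iis_eq_scoreSRS, pref_scoreSRS, eIIS_of_isConcatSum hr, eIIS_of_isConcatSum hr,
    hlen, e₁x, e₁y] at hP
  simp at hP

end IIS

section Plurality

/-- The paper's `x₁`; it is `0` on the empty ranking. -/
def topCount (r : CoalRanking X) (x : X) : ℕ := (theta r x).headD 0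

lemma plurality_eq_scoreSRS : (plurality : SRSMap X) = scoreSRS topCount := rfl

lemma topCount_of_classes_eq_nil {r : CoalRanking X} (h : r.classes = []) (x : X) :
    topCount r x = 0 := by
  simp [topCount, theta, h]

lemma topCount_of_isConcatSum {r r₁ r₂ : CoalRanking X} (hr : IsConcatSum r r₁ r₂) (x : X) :
    topCount r x = if r₁.classes = [] then topCount r₂ x else topCount r₁ x := by
  rcases h : r₁.classes with _ | ⟨C, L⟩ <;> simp [topCount, theta, hr.2, h]

lemma topCount_single (C : Finset (Finset X)) (hC : C.Nonempty) (hS : ∀ S ∈ C, S.Nonempty)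
    (x : X) : topCount (single C hC hS) x = cnt x C :=
  rfl

lemma plurality_IICCON : IICCON (plurality : SRSMap X) :=
  IICCON_scoreSRS fun r₁ _ _ hr =>
    ⟨fun a b => if r₁.classes = [] then b else a, topCount_of_isConcatSum hr⟩

lemma plurality_concatLeftDecisive : ConcatLeftDecisive (plurality : SRSMap X) := by
  intro r₁ r₂ r hr x y hP
  rw [plurality_eq_scoreSRS, pref_scoreSRS] at hP ⊢
  have hne : r₁.classes ≠ [] := fun h => by
    simp [topCount_of_classes_eq_nil h] at hP
  rwa [topCount_of_isConcatSum hr, topCount_of_isConcatSum hr, if_neg hne, if_neg hne]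

lemma not_IPCCON_plurality {x y : X} (hxy : x ≠ y) : ¬ IPCCON (plurality : SRSMap X) := by
  have hd : Disjoint ({{x, y}} : Finset (Finset X)) {{x}} := by
    rw [Finset.disjoint_singleton_right, Finset.mem_singleton]
    intro h
    simpa [Finset.card_pair hxy] using congrArg Finset.card h
  set r₁ := single {{x, y}} (by simp) (by simp)
  set r₂ := single {{x}} (by simp) (by simp)
  have hr := isConcatSum_concat r₁ r₂ (by simpa [r₁, r₂] using hd)
  have t₁x : topCount r₁ x = 1 := by simp [r₁, topCount_single, cnt, Finset.filter_singleton]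
  have t₁y : topCount r₁ y = 1 := by simp [r₁, topCount_single, cnt, Finset.filter_singleton]
  have t₂x : topCount r₂ x = 1 := by simp [r₂, topCount_single, cnt, Finset.filter_singleton]
  have t₂y : topCount r₂ y = 0 := by
    simp [r₂, topCount_single, cnt, Finset.filter_singleton, hxy.symm]
  have hne : r₁.classes ≠ [] := List.cons_ne_nil _ _
  intro hIP
  have hP := hIP r₁ r₂ _ hr x y (by rw [plurality_eq_scoreSRS, ind_scoreSRS]; omega)
    (by rw [plurality_eq_scoreSRS, pref_scoreSRS]; omega)
  rw [plurality_eq_scoreSRS, pref_scoreSRS, topCount_of_isConcatSum hr,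
    topCount_of_isConcatSum hr, if_neg hne, if_neg hne, t₁x, t₁y] at hP
  exact hP.false

end Plurality

end SocRank

/-- both IIS and plurality satisfy II-CCON, PI-CCON and PP-CCON,
but neither satisfies IP-CCON. -/
theorem iis_plurality_partial_ccon {X : Type*} [DecidableEq X] [Fintype X]
    (hX : 3 ≤ Fintype.card X) :
    (IICCON (iis : SRSMap X) ∧ PICCON (iis : SRSMap X) ∧ PPCCON (iis : SRSMap X) ∧
      ¬ IPCCON (iis : SRSMap X)) ∧
    (IICCON (plurality : SRSMap X) ∧ PICCON (plurality : SRSMap X) ∧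
      PPCCON (plurality : SRSMap X) ∧ ¬ IPCCON (plurality : SRSMap X)) := by
  obtain ⟨s, -, hs⟩ := Finset.exists_subset_card_eq (s := (Finset.univ : Finset X)) hX
  obtain ⟨x, y, z, hxy, hxz, hyz, -⟩ := Finset.card_eq_three.mp hs
  exact ⟨⟨iis_IICCON, iis_concatLeftDecisive.piccon, iis_concatLeftDecisive.ppccon,
      not_IPCCON_iis hxy hxz hyz⟩,
    ⟨plurality_IICCON, plurality_concatLeftDecisive.piccon,
      plurality_concatLeftDecisive.ppccon, not_IPCCON_plurality hxy⟩⟩
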